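/- In the subset construction subsetT applied to an FST, for every subset S of FST states and every input symbol σ, the behaviour of the Mealy state T(S,σ) on any nonempty input word w equals the union over s ∈ S and over states p reachable from s by σ of B(p)(w). -/

import Mathlib

/-!
From `ε(Y)`, the Mealy machine reading `w` reaches exactly the set `R` of FST states reachable
from `Y` on `w` (ε-moves included), and on a further symbol `a` its output `G(R, a)` collects the
outputs of the `a`-transitions leaving `R` and of the ε-transitions right after them: this is the
union of the `B(p)(w·a)` over `p ∈ Y`. As `T(S, a)` is the ε-closure of the `a`-successors of `S`,
the theorem is the case where `Y` is that set of successors.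
-/

/-- A finite-state transducer: a nondeterministic machine reading input symbols from `σ`
(or `ε`, encoded `none`) and possibly emitting output symbols from `γ`. -/
structure FST (Q : Type) (σ : Type) (γ : Type) where
  step : Q → Option σ → Option γ → Q → Prop
  I : Set Q
  F : Set Q

namespace FST

variable {Q σ γ : Type} (M : FST Q σ γ)

/-- One ε-transition (possibly with output). -/
def EpsStep (p q : Q) : Prop := ∃ g, M.step p none g q

/-- `q` is in the ε-closure of `p`. -/
def EpsCl (p q : Q) : Prop := Relation.ReflTransGen M.EpsStep p q

/-- ε-closure of a set of states. -/
def epsClSet (S : Set Q) : Set Q := {q | ∃ p ∈ S, M.EpsCl p q}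

/-- `Reads p w q`: from `p` the machine may reach `q` reading the input word `w`,
with ε-transitions interleaved anywhere. -/
inductive Reads : Q → List σ → Q → Prop
  | refl (p : Q) : Reads p [] p
  | eps {p q r : Q} {w : List σ} : M.EpsStep p q → Reads q w r → Reads p w r
  | cons {p q r : Q} {a : σ} {w : List σ} (g : Option γ) :
      M.step p (some a) g q → Reads q w r → Reads p (a :: w) r

/-- `B(p)(ε)`: outputs emittable from `p` by ε-transitions only. -/
def behNil (p : Q) : Set γ := {g | ∃ q r, M.EpsCl p q ∧ M.step q none (some g) r}

/-- The behaviour of state `p`: `B(p)(ε)` is `behNil p`, and `B(p)(w·a)` is the set of outputs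
emitted on the transition reading the final `a` or by ε-transitions immediately afterwards. -/
def beh (p : Q) (w : List σ) : Set γ :=
  {g | (w = [] ∧ g ∈ M.behNil p) ∨
    ∃ w' a, w = w' ++ [a] ∧ ∃ (g' : Option γ) (q r : Q),
      M.Reads p w' q ∧ M.step q (some a) g' r ∧ (some g = g' ∨ g ∈ M.behNil r)}

/-- The behaviour of the transducer: the union of the behaviours of its initial states. -/
def machineBeh (w : List σ) : Set γ := ⋃ i ∈ M.I, M.beh i w

/-- Transition function `T` of the subset construction `subsetT`. -/
def Tfun (S : Set Q) (a : σ) : Set Q :=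
  M.epsClSet {q | ∃ p ∈ S, ∃ g, M.step p (some a) g q}

/-- Output function `G` of the subset construction `subsetT`. -/
def Gfun (S : Set Q) (a : σ) : Set γ :=
  {g | ∃ p ∈ S, ∃ q, M.step p (some a) (some g) q} ∪
  {g | ∃ p ∈ M.Tfun S a, ∃ q ∈ M.Tfun S a, M.step p none (some g) q}

/-- Iterating `T` along a word. -/
def runT (S : Set Q) (w : List σ) : Set Q := w.foldl M.Tfun S

/-- The behaviour of the state `S` of the Mealy machine `subsetT M`:
nothing is emitted on the empty word, and on `w·a` the output is `G(runT S w, a)`. -/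
def subsetBeh (S : Set Q) (w : List σ) : Set γ :=
  {g | ∃ w' a, w = w' ++ [a] ∧ g ∈ M.Gfun (M.runT S w') a}

/-- Transition function `T'` of the modified subset construction `subsetTC`,
which adds the initial closure to every transition target. -/
def TCfun (S : Set Q) (a : σ) : Set Q := M.Tfun S a ∪ M.epsClSet M.I

/-- Iterating `T'` along a word. -/
def runTC (S : Set Q) (w : List σ) : Set Q := w.foldl M.TCfun S

/-- The behaviour of the Mealy machine computed by `subsetTC`, from its initial state `ε(I)`. -/
def subsetTCBeh (w : List σ) : Set γ :=
  {g | ∃ w' a, w = w' ++ [a] ∧ g ∈ M.Gfun (M.runTC (M.epsClSet M.I) w') a}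

end FST

namespace FST

variable {Q σ γ : Type} (M : FST Q σ γ)

theorem reads_of_epsCl {p q r : Q} {w : List σ} (hpq : M.EpsCl p q) (hqr : M.Reads q w r) :
    M.Reads p w r := by
  induction hpq using Relation.ReflTransGen.head_induction_on with
  | refl => exact hqr
  | head hstep _ ih => exact .eps hstep ih

theorem reads_nil_iff {p q : Q} : M.Reads p ([] : List σ) q ↔ M.EpsCl p q := by
  refine ⟨fun h => ?_, fun h => M.reads_of_epsCl h (.refl q)⟩
  generalize hw : ([] : List σ) = w at h
  induction h with
  | refl => exact .refl
  | eps hstep _ ih => exact .head hstep (ih hw)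
  | cons => cases hw

theorem reads_cons_iff {p r : Q} {a : σ} {w : List σ} :
    M.Reads p (a :: w) r ↔
      ∃ p' q, M.EpsCl p p' ∧ (∃ g, M.step p' (some a) g q) ∧ M.Reads q w r := by
  refine ⟨fun h => ?_, fun ⟨p', q, hpp', ⟨g, hstep⟩, hqr⟩ =>
    M.reads_of_epsCl hpp' (.cons g hstep hqr)⟩
  generalize hv : a :: w = v at h
  induction h with
  | refl => cases hv
  | eps hstep _ ih =>
    obtain ⟨p', q, hpp', hstep', hqr⟩ := ih hv
    exact ⟨p', q, .head hstep hpp', hstep', hqr⟩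
  | cons g hstep hqr =>
    cases hv
    exact ⟨_, _, .refl, ⟨g, hstep⟩, hqr⟩

theorem runT_epsClSet (w : List σ) (X : Set Q) :
    M.runT (M.epsClSet X) w = {q | ∃ p ∈ X, M.Reads p w q} := by
  induction w generalizing X with
  | nil => ext q; simp only [runT, List.foldl_nil, epsClSet, Set.mem_ofPred_eq, reads_nil_iff]
  | cons a w ih =>
    rw [runT, List.foldl_cons, ← runT, Tfun, ih]
    ext r
    simp only [epsClSet, Set.mem_ofPred_eq, reads_cons_iff]
    constructor
    · rintro ⟨q, ⟨p', ⟨p, hp, hpp'⟩, hstep⟩, hqr⟩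
      exact ⟨p, hp, p', q, hpp', hstep, hqr⟩
    · rintro ⟨p, hp, p', q, hpp', hstep, hqr⟩
      exact ⟨q, ⟨p', ⟨p, hp, hpp'⟩, hstep⟩, hqr⟩

theorem mem_Gfun_iff {Y : Set Q} {a : σ} {g : γ} :
    g ∈ M.Gfun Y a ↔
      ∃ q ∈ Y, ∃ g' r, M.step q (some a) g' r ∧ (some g = g' ∨ g ∈ M.behNil r) := by
  constructor
  · rintro (⟨q, hq, r, hstep⟩ | ⟨p, ⟨r, ⟨q, hq, g', hstep⟩, hrp⟩, _, -, hout⟩)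
    · exact ⟨q, hq, some g, r, hstep, .inl rfl⟩
    · exact ⟨q, hq, g', r, hstep, .inr ⟨p, _, hrp, hout⟩⟩
  · rintro ⟨q, hq, g', r, hstep, rfl | ⟨p, p', hrp, hout⟩⟩
    · exact .inl ⟨q, hq, r, hstep⟩
    · have hr : r ∈ {r | ∃ q ∈ Y, ∃ g, M.step q (some a) g r} := ⟨q, hq, g', hstep⟩
      exact .inr ⟨p, ⟨r, hr, hrp⟩, p', ⟨r, hr, hrp.tail ⟨_, hout⟩⟩, hout⟩

theorem mem_beh_append_singleton {p : Q} {w : List σ} {a : σ} {g : γ} :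
    g ∈ M.beh p (w ++ [a]) ↔ ∃ (g' : Option γ) (q r : Q),
      M.Reads p w q ∧ M.step q (some a) g' r ∧ (some g = g' ∨ g ∈ M.behNil r) := by
  simp only [beh, Set.mem_ofPred_eq, List.append_eq_nil_iff, List.cons_ne_nil, and_false,
    false_and, List.append_singleton_inj, false_or]
  constructor
  · rintro ⟨_, _, ⟨rfl, rfl⟩, h⟩
    exact h
  · exact fun h => ⟨w, a, ⟨rfl, rfl⟩, h⟩

theorem subsetBeh_append_singleton (X : Set Q) (w : List σ) (a : σ) :
    M.subsetBeh X (w ++ [a]) = M.Gfun (M.runT X w) a := by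
  ext g
  simp only [subsetBeh, Set.mem_ofPred_eq, List.append_singleton_inj]
  constructor
  · rintro ⟨_, _, ⟨rfl, rfl⟩, h⟩
    exact h
  · exact fun h => ⟨w, a, ⟨rfl, rfl⟩, h⟩

theorem subsetBeh_epsClSet (Y : Set Q) {w : List σ} (hw : w ≠ []) :
    M.subsetBeh (M.epsClSet Y) w = ⋃ p ∈ Y, M.beh p w := by
  obtain ⟨w, a, rfl⟩ := (List.eq_nil_or_concat' w).resolve_left hw
  ext g
  simp only [subsetBeh_append_singleton, runT_epsClSet, mem_Gfun_iff, Set.mem_iUnion,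
    mem_beh_append_singleton, Set.mem_ofPred_eq]
  constructor
  · rintro ⟨q, ⟨p, hp, hpq⟩, g', r, hstep, hout⟩
    exact ⟨p, hp, g', q, r, hpq, hstep, hout⟩
  · rintro ⟨p, hp, g', q, r, hpq, hstep, hout⟩
    exact ⟨q, ⟨p, hp, hpq⟩, g', r, hstep, hout⟩

end FST

/-- In `subsetT`, for every subset `S` of FST states and input symbol `a`,
the behaviour of the Mealy state `T(S,a)` on any nonempty word `w` is the union, over `s ∈ S`
and states `p` reachable from `s` by `a`, of the behaviours `B(p)(w)`. -/
theorem stmt4 {Q σ γ : Type} (M : FST Q σ γ) (S : Set Q) (a : σ) (w : List σ)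
    (hw : w ≠ []) :
    M.subsetBeh (M.Tfun S a) w =
      ⋃ s ∈ S, ⋃ p ∈ {r | ∃ g, M.step s (some a) g r}, M.beh p w := by
  rw [FST.Tfun, M.subsetBeh_epsClSet _ hw]
  ext g
  simp only [Set.mem_iUnion, Set.mem_ofPred_eq]
  constructor
  · rintro ⟨p, ⟨s, hs, hstep⟩, hg⟩
    exact ⟨s, hs, p, hstep, hg⟩
  · rintro ⟨s, hs, p, hstep, hg⟩
    exact ⟨p, ⟨s, hs, hstep⟩, hg⟩
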